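/- arXiv:1308.3254 — 2 statements merged into one kernel-verified Lean document; each statement's English description precedes it below -/
import Mathlib

section
/- For unitaries U : H₁ → H₂ and V : H₂ → H₃, the link product of the Choi operators of the corresponding unitary channels equals the Choi operator of the composed channel: |U⟩⟩⟨⟨U| * |V⟩⟩⟨⟨V| = |VU⟩⟩⟨⟨VU|, where the link (partial transpose and trace) is taken over H₂. -/
open Matrix

/-- The Choi operator `|U⟩⟩⟨⟨U|` of a unitary channel `ρ ↦ U ρ U†`,
as a matrix on `H_out ⊗ H_in`. -/
def choiUnitary {n : ℕ} (U : Matrix (Fin n) (Fin n) ℂ) :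
    Matrix (Fin n × Fin n) (Fin n × Fin n) ℂ :=
  fun p q => U p.1 p.2 * star (U q.1 q.2)

/-- The link product over the shared space `H₂`:
`A * B = Tr_{H₂}[(A ⊗ I₃)(I₁ ⊗ B^{T₂})]`, where `A` acts on `H₂ ⊗ H₁`, `B` acts on
`H₃ ⊗ H₂`, and the result acts on `H₃ ⊗ H₁`; written entrywise after carrying out the
partial transpose on `H₂` and the partial trace over `H₂`. -/
noncomputable def linkOverH2 {n : ℕ}
    (A : Matrix (Fin n × Fin n) (Fin n × Fin n) ℂ)
    (B : Matrix (Fin n × Fin n) (Fin n × Fin n) ℂ) :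
    Matrix (Fin n × Fin n) (Fin n × Fin n) ℂ :=
  fun p q => ∑ b : Fin n, ∑ b' : Fin n, A (b, p.2) (b', q.2) * B (p.1, b) (q.1, b')

theorem linkOverH2_choiUnitary_apply {n : ℕ} (U V : Matrix (Fin n) (Fin n) ℂ)
    (p q : Fin n × Fin n) :
    linkOverH2 (choiUnitary U) (choiUnitary V) p q =
      (∑ b, V p.1 b * U b p.2) * star (∑ b', V q.1 b' * U b' q.2) := by
  simp only [linkOverH2, choiUnitary, star_sum, star_mul', Finset.sum_mul_sum]
  refine Finset.sum_congr rfl fun b _ => Finset.sum_congr rfl fun b' _ => ?_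
  ring

theorem link_choi_unitaries_general {n : ℕ} (U V : Matrix (Fin n) (Fin n) ℂ) :
    linkOverH2 (choiUnitary U) (choiUnitary V) = choiUnitary (V * U) := by
  ext p q
  simp only [linkOverH2_choiUnitary_apply, choiUnitary, mul_apply]

/-- `|U⟩⟩⟨⟨U| * |V⟩⟩⟨⟨V| = |VU⟩⟩⟨⟨VU|`, the link being taken over `H₂`. -/
theorem link_choi_unitaries {n : ℕ} (U V : Matrix (Fin n) (Fin n) ℂ)
    (hU : U ∈ Matrix.unitaryGroup (Fin n) ℂ) (hV : V ∈ Matrix.unitaryGroup (Fin n) ℂ) :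
    linkOverH2 (choiUnitary U) (choiUnitary V) = choiUnitary (V * U) :=
  link_choi_unitaries_general U V
end

section
/- For 1→2 cloning of SU(d) unitary channels, the maximum of F = (√(q⁺_α p⁺_α) + √(q⁻_α p⁻_α))² + q⁺_β (1 − p⁺_α) + q⁻_γ (1 − p⁻_α) over 0 ≤ p⁺_α, p⁻_α ≤ 1, with d⁴q⁺_α = d₊, d⁴q⁻_α = d₋, d⁴q⁺_β = d₊/(d₊−1), d⁴q⁻_γ = d₋/(d₋−1), where d₊ = d(d+1)/2 and d₋ = d(d−1)/2 and d ≥ 2, is attained at p⁺_α = p⁻_α = 1 and equals (√d₊ + √d₋)²/d⁴. -/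
/-!
Writing `u = √x`, `w = √y`, the deficit `(√a + √b)² - (√(a x) + √(b y))²` equals
`a (1 - u²) + b (1 - w²) + 2 √(a b) (1 - u w)`, which dominates the linear terms
`p (1 - x) + q (1 - y)` as soon as `p ≤ a` and `q ≤ b`. For the cloning coefficients this
reduces to `m / (m - 1) ≤ m` for `m = d₊, d₋`, which holds because both are natural numbers.
-/

open Real Set

lemma sq_sqrt_mul_add_sqrt_mul_add_le {a b p q x y : ℝ} (ha : 0 ≤ a) (hb : 0 ≤ b)
    (hp : p ≤ a) (hq : q ≤ b) (hx : x ∈ Icc (0 : ℝ) 1) (hy : y ∈ Icc (0 : ℝ) 1) :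
    (√(a * x) + √(b * y)) ^ 2 + p * (1 - x) + q * (1 - y) ≤ (√a + √b) ^ 2 := by
  obtain ⟨hx0, hx1⟩ := hx
  obtain ⟨hy0, hy1⟩ := hy
  rw [sqrt_mul ha, sqrt_mul hb]
  have hu1 : √x ≤ 1 := sqrt_le_one.2 hx1
  have hw1 : √y ≤ 1 := sqrt_le_one.2 hy1
  have huw : √x * √y ≤ 1 := mul_le_one₀ hu1 (sqrt_nonneg y) hw1
  have hst : 0 ≤ √a * √b := mul_nonneg (sqrt_nonneg a) (sqrt_nonneg b)
  have hpx : p * (1 - x) ≤ √a ^ 2 * (1 - x) := by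
    rw [sq_sqrt ha]; exact mul_le_mul_of_nonneg_right hp (by linarith)
  have hqy : q * (1 - y) ≤ √b ^ 2 * (1 - y) := by
    rw [sq_sqrt hb]; exact mul_le_mul_of_nonneg_right hq (by linarith)
  nlinarith [mul_le_mul_of_nonneg_left huw hst, sq_sqrt hx0, sq_sqrt hy0]

lemma isGreatest_sq_sqrt_mul_add_sqrt_mul_add {a b p q : ℝ} (ha : 0 ≤ a) (hb : 0 ≤ b)
    (hp : p ≤ a) (hq : q ≤ b) :
    IsGreatest {v : ℝ | ∃ x ∈ Icc (0 : ℝ) 1, ∃ y ∈ Icc (0 : ℝ) 1,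
        v = (√(a * x) + √(b * y)) ^ 2 + p * (1 - x) + q * (1 - y)}
      ((√a + √b) ^ 2) := by
  refine ⟨⟨1, right_mem_Icc.2 zero_le_one, 1, right_mem_Icc.2 zero_le_one, by simp⟩, ?_⟩
  rintro v ⟨x, hx, y, hy, rfl⟩
  exact sq_sqrt_mul_add_sqrt_mul_add_le ha hb hp hq hx hy

lemma sq_sqrt_div_add_sqrt_div {a b c : ℝ} (ha : 0 ≤ a) (hb : 0 ≤ b) (hc : 0 ≤ c) :
    (√(a / c) + √(b / c)) ^ 2 = (√a + √b) ^ 2 / c := by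
  rw [sqrt_div ha, sqrt_div hb, ← add_div, div_pow, sq_sqrt hc]

-- For `m = 1` the left-hand side is the junk value `1 / 0 = 0`.
lemma natCast_div_natCast_sub_one_le (m : ℕ) : (m : ℝ) / (m - 1) ≤ m := by
  rcases le_or_gt m 1 with hm | hm
  · have hm' : (m : ℝ) ≤ 1 := by exact_mod_cast hm
    exact (div_nonpos_of_nonneg_of_nonpos m.cast_nonneg (by linarith)).trans m.cast_nonneg
  · have hm' : (2 : ℝ) ≤ m := by exact_mod_cast hm
    exact div_le_self m.cast_nonneg (by linarith)

theorem cloning_su_d_fidelity_general (d : ℕ) :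
    let dp : ℝ := (d : ℝ) * ((d : ℝ) + 1) / 2
    let dm : ℝ := (d : ℝ) * ((d : ℝ) - 1) / 2
    let F : ℝ → ℝ → ℝ := fun x y =>
      (Real.sqrt (dp / (d : ℝ) ^ 4 * x) + Real.sqrt (dm / (d : ℝ) ^ 4 * y)) ^ 2 +
        dp / (dp - 1) / (d : ℝ) ^ 4 * (1 - x) + dm / (dm - 1) / (d : ℝ) ^ 4 * (1 - y)
    IsGreatest {v : ℝ | ∃ x ∈ Set.Icc (0 : ℝ) 1, ∃ y ∈ Set.Icc (0 : ℝ) 1, v = F x y}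
        ((Real.sqrt dp + Real.sqrt dm) ^ 2 / (d : ℝ) ^ 4) ∧
      F 1 1 = (Real.sqrt dp + Real.sqrt dm) ^ 2 / (d : ℝ) ^ 4 := by
  intro dp dm F
  have hdp : dp = ((d + 1).choose 2 : ℕ) := by rw [Nat.cast_choose_two]; push_cast; ring
  have hdm : dm = (d.choose 2 : ℕ) := by rw [Nat.cast_choose_two]
  have hdp0 : 0 ≤ dp := hdp ▸ Nat.cast_nonneg _
  have hdm0 : 0 ≤ dm := hdm ▸ Nat.cast_nonneg _
  have hD : (0 : ℝ) ≤ (d : ℝ) ^ 4 := by positivity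
  have hmax := isGreatest_sq_sqrt_mul_add_sqrt_mul_add (div_nonneg hdp0 hD) (div_nonneg hdm0 hD)
    (div_le_div_of_nonneg_right (hdp ▸ natCast_div_natCast_sub_one_le _) hD)
    (div_le_div_of_nonneg_right (hdm ▸ natCast_div_natCast_sub_one_le _) hD)
  have hF11 : F 1 1 = (√(dp / (d : ℝ) ^ 4) + √(dm / (d : ℝ) ^ 4)) ^ 2 := by simp [F]
  rw [sq_sqrt_div_add_sqrt_div hdp0 hdm0 hD] at hmax hF11
  exact ⟨hmax, hF11⟩

/-- 1→2 cloning of SU(d) unitary channels.  With `d₊ = d(d+1)/2`,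
`d₋ = d(d−1)/2`, and coefficients `q⁺_α = d₊/d⁴`, `q⁻_α = d₋/d⁴`, `q⁺_β = d₊/((d₊−1)d⁴)`,
`q⁻_γ = d₋/((d₋−1)d⁴)`, the maximum of
`F(x,y) = (√(q⁺_α x) + √(q⁻_α y))² + q⁺_β (1−x) + q⁻_γ (1−y)` over `x, y ∈ [0,1]`
is attained at `x = y = 1` and equals `(√d₊ + √d₋)²/d⁴`. -/
theorem cloning_su_d_fidelity (d : ℕ) (hd : 2 ≤ d) :
    let dp : ℝ := (d : ℝ) * ((d : ℝ) + 1) / 2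
    let dm : ℝ := (d : ℝ) * ((d : ℝ) - 1) / 2
    let F : ℝ → ℝ → ℝ := fun x y =>
      (Real.sqrt (dp / (d : ℝ) ^ 4 * x) + Real.sqrt (dm / (d : ℝ) ^ 4 * y)) ^ 2 +
        dp / (dp - 1) / (d : ℝ) ^ 4 * (1 - x) + dm / (dm - 1) / (d : ℝ) ^ 4 * (1 - y)
    IsGreatest {v : ℝ | ∃ x ∈ Set.Icc (0 : ℝ) 1, ∃ y ∈ Set.Icc (0 : ℝ) 1, v = F x y}
        ((Real.sqrt dp + Real.sqrt dm) ^ 2 / (d : ℝ) ^ 4) ∧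
      F 1 1 = (Real.sqrt dp + Real.sqrt dm) ^ 2 / (d : ℝ) ^ 4 :=
  cloning_su_d_fidelity_general d
end
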